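/- arXiv:2309.11391 — 5 statements merged into one kernel-verified Lean document; each statement's English description precedes it below -/
import Mathlib

section
/- Given k ∈ ℕ and an interlacing pair (m̄, n̄) of k-element subsets of the even natural numbers 2ℕ, there exists a k-element subset p̄ of ℕ such that the pairs (m̄, p̄) and (n̄, p̄) are both strongly interlacing. -/
open Filter Topology
open scoped ZeroAtInfty ENNReal NNReal

/-- Increasing `k`-tuples of naturals: the vertices `[ℕ]^k` of the interlacing graph. -/
def IncTuple (k : ℕ) := {f : Fin k → ℕ // StrictMono f}

/-- `m₁ ≤ n₁ ≤ m₂ ≤ n₂ ≤ ⋯ ≤ m_k ≤ n_k`. -/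
def InterLE {k : ℕ} (m n : Fin k → ℕ) : Prop :=
  (∀ i, m i ≤ n i) ∧ ∀ (i : ℕ) (h : i + 1 < k), n ⟨i, Nat.lt_of_succ_lt h⟩ ≤ m ⟨i + 1, h⟩

/-- The pair `(m, n)` interlaces. -/
def Interlacing {k : ℕ} (m n : Fin k → ℕ) : Prop := InterLE m n ∨ InterLE n m

/-- `m₁ ≤ n₁ < m₂ ≤ n₂ < ⋯ < m_k ≤ n_k`. -/
def StrongInterLE {k : ℕ} (m n : Fin k → ℕ) : Prop :=
  (∀ i, m i ≤ n i) ∧ ∀ (i : ℕ) (h : i + 1 < k), n ⟨i, Nat.lt_of_succ_lt h⟩ < m ⟨i + 1, h⟩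

/-- The pair `(m, n)` is strongly interlacing. -/
def StronglyInterlacing {k : ℕ} (m n : Fin k → ℕ) : Prop :=
  StrongInterLE m n ∨ StrongInterLE n m

/-- The interlacing graph on `[ℕ]^k`. -/
def interGraph (k : ℕ) : SimpleGraph (IncTuple k) where
  Adj m n := m ≠ n ∧ Interlacing m.1 n.1
  symm := ⟨fun _ _ h => ⟨h.1.symm, h.2.symm⟩⟩
  loopless := ⟨fun _ h => h.1 rfl⟩

/-- The interlacing graph metric `d_I`. -/
noncomputable def dI {k : ℕ} (m n : IncTuple k) : ℕ := (interGraph k).dist m n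

/-- All entries of the tuple belong to `L`. -/
def memAll {k : ℕ} (L : Set ℕ) (m : IncTuple k) : Prop := ∀ i, m.1 i ∈ L

/-- `m̄ < n̄`: every entry of `m` is below every entry of `n`. -/
def ordLT {k : ℕ} (m n : IncTuple k) : Prop := ∀ i j, m.1 i < n.1 j

/-- Kalton's `Q(ε, δ)`-property of a metric space. -/
def HasQProp (M : Type*) [MetricSpace M] (ε δ : ℝ) : Prop :=
  ∀ (k : ℕ) (f : IncTuple k → M),
    (∀ m n : IncTuple k, dist (f m) (f n) ≤ δ * dI m n) →
    ∃ L : Set ℕ, L.Infinite ∧ ∀ m n : IncTuple k, memAll L m → memAll L n → ordLT m n →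
      dist (f m) (f n) < ε

/-- The modulus `Δ_M(ε)`. -/
noncomputable def DeltaMod (M : Type*) [MetricSpace M] (ε : ℝ) : ℝ :=
  sSup {δ : ℝ | 0 ≤ δ ∧ HasQProp M ε δ}

/-- The constant `q_M`. -/
noncomputable def qMod (M : Type*) [MetricSpace M] : ℝ :=
  sSup {c : ℝ | 0 ≤ c ∧ ∀ ε : ℝ, 0 < ε → c * ε ≤ DeltaMod M ε}

/-- Boundedness of a map into a metric space. -/
def IsBddMap {α : Type*} {M : Type*} [MetricSpace M] (f : α → M) : Prop :=
  ∃ R : ℝ, ∀ x y, dist (f x) (f y) ≤ R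

/-- Property `Q` with constant `C`: every Lipschitz map on an interlacing graph
concentrates on `[L]^k` up to `C·Lip(f)`. -/
def HasPropQConst (M : Type*) [MetricSpace M] (C : ℝ) : Prop :=
  ∀ (k : ℕ) (f : IncTuple k → M) (K : ℝ), 0 ≤ K →
    (∀ m n : IncTuple k, dist (f m) (f n) ≤ K * dI m n) →
    ∃ L : Set ℕ, L.Infinite ∧ ∀ m n : IncTuple k, memAll L m → memAll L n →
      dist (f m) (f n) ≤ C * K

/-- Property `Q`. -/
def HasPropQ (M : Type*) [MetricSpace M] : Prop := ∃ C : ℝ, 0 ≤ C ∧ HasPropQConst M C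

/-- The property `Q` constant `Q_M`. -/
noncomputable def QConst (M : Type*) [MetricSpace M] : ℝ :=
  sInf {C : ℝ | 0 ≤ C ∧ HasPropQConst M C}

theorem compl_card {l m : ℕ} (P : Finset (Fin (l + m))) (hP : P.card = l) : Pᶜ.card = m := by
  rw [Finset.card_compl, hP, Fintype.card_fin]; omega

/-- The increasing subtuple `(n_i : i ∈ P)`. -/
def subTuple {k j : ℕ} (n : Fin k → ℕ) (P : Finset (Fin k)) (h : P.card = j) :
    Fin j → ℕ := fun i => n (P.orderEmbOfFin h i)

/-- The set of distances `d_M(f(n_i : i ∈ P), g(n_i : i ∈ P^c))` over `n̄ ∈ [L]^{l+m}`. -/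
def cutDistSet {l m : ℕ} {M : Type*} [MetricSpace M]
    (f : (Fin l → ℕ) → M) (g : (Fin m → ℕ) → M) (L : Set ℕ)
    (P : Finset (Fin (l + m))) (hP : P.card = l) : Set ℝ :=
  {d : ℝ | ∃ n : Fin (l + m) → ℕ, StrictMono n ∧ (∀ i, n i ∈ L) ∧
    d = dist (f (subTuple n P hP)) (g (subTuple n Pᶜ (compl_card P hP)))}

/-- `C`-cut stability. -/
def CutStableWith (M : Type*) [MetricSpace M] (C : ℝ) : Prop :=
  ∀ (l m : ℕ) (f : (Fin l → ℕ) → M) (g : (Fin m → ℕ) → M),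
    IsBddMap f → IsBddMap g → ∀ L : Set ℕ, L.Infinite →
    ∀ (P Q : Finset (Fin (l + m))) (hP : P.card = l) (hQ : Q.card = l),
      sInf (cutDistSet f g L P hP) ≤ C * sSup (cutDistSet f g L Q hQ)

/-- A permutation of `{1,…,l+m}` preserving the order on `{1,…,l}` and on `{l+1,…,l+m}`. -/
def OrderPreservingPerm {l m : ℕ} (π : Equiv.Perm (Fin (l + m))) : Prop :=
  StrictMono (fun i : Fin l => π (Fin.castAdd m i)) ∧
  StrictMono (fun j : Fin m => π (Fin.natAdd l j))

/-- Distances `d_M(f(n_{π(1)},…,n_{π(l)}), g(n_{π(l+1)},…,n_{π(l+m)}))` over `n̄ ∈ [L]^{l+m}`. -/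
def permDistSet {l m : ℕ} {M : Type*} [MetricSpace M]
    (f : (Fin l → ℕ) → M) (g : (Fin m → ℕ) → M) (L : Set ℕ)
    (π : Equiv.Perm (Fin (l + m))) : Set ℝ :=
  {d : ℝ | ∃ n : Fin (l + m) → ℕ, StrictMono n ∧ (∀ i, n i ∈ L) ∧
    d = dist (f (fun i => n (π (Fin.castAdd m i)))) (g (fun j => n (π (Fin.natAdd l j))))}

/-- `C`-upper stability. -/
def UpperStableWith (M : Type*) [MetricSpace M] (C : ℝ) : Prop :=
  ∀ (l m : ℕ) (f : (Fin l → ℕ) → M) (g : (Fin m → ℕ) → M),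
    IsBddMap f → IsBddMap g → ∀ L : Set ℕ, L.Infinite →
    ∀ π : Equiv.Perm (Fin (l + m)), OrderPreservingPerm π →
      sInf (permDistSet f g L (Equiv.refl _)) ≤ C * sSup (permDistSet f g L π)

/-- The modulus of continuity `ω_h`. -/
noncomputable def omegaMod {M N : Type*} [MetricSpace M] [MetricSpace N] (h : M → N)
    (t : ℝ) : ℝ≥0∞ :=
  ⨆ p : {p : M × M // dist p.1 p.2 ≤ t}, edist (h p.1.1) (h p.1.2)

/-- The compression modulus `ρ_h`. -/
noncomputable def rhoMod {M N : Type*} [MetricSpace M] [MetricSpace N] (h : M → N)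
    (t : ℝ) : ℝ≥0∞ :=
  ⨅ p : {p : M × M // t ≤ dist p.1 p.2}, edist (h p.1.1) (h p.1.2)

/-- A coarse embedding, expressed via the moduli. -/
def CoarseEmbMod {M N : Type*} [MetricSpace M] [MetricSpace N] (h : M → N) : Prop :=
  (∀ t : ℝ, omegaMod h t < ⊤) ∧ Tendsto (rhoMod h) atTop (𝓝 ⊤)

/-- A uniform embedding, expressed via the moduli. -/
def UniformEmbMod {M N : Type*} [MetricSpace M] [MetricSpace N] (h : M → N) : Prop :=
  Tendsto (omegaMod h) (𝓝[>] (0 : ℝ)) (𝓝 0) ∧ ∀ t : ℝ, 0 < t → 0 < rhoMod h t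

/-- A free ultrafilter on `ℕ`. -/
def FreeUF (U : Ultrafilter ℕ) : Prop := (U : Filter ℕ) ≤ Filter.cofinite

/-- The iterated ultrafilter limit `lim_{n₁,U₁} ⋯ lim_{n_k,U_k} F(n₁,…,n_k)`. -/
noncomputable def ultraLim : (k : ℕ) → (Fin k → Ultrafilter ℕ) → ((Fin k → ℕ) → ℝ) → ℝ
  | 0, _, F => F (fun i => i.elim0)
  | k + 1, U, F => ultraLim k (fun i => U i.castSucc)
      (fun n => limUnder (U (Fin.last k)) (fun j => F (Fin.snoc n j)))

/-- An unrooted (countably branching) tree of height `k` in `X`. -/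
def TreeU (X : Type*) (k : ℕ) := (i : Fin k) → (Fin (i.1 + 1) → ℕ) → X

/-- A rooted (countably branching) tree of height `k` in `X`. -/
def TreeR (X : Type*) (k : ℕ) := (i : Fin (k + 1)) → (Fin i.1 → ℕ) → X

/-- A normalized unrooted tree takes values in the unit sphere. -/
def NormalizedU {X : Type*} [NormedAddCommGroup X] {k : ℕ} (t : TreeU X k) : Prop :=
  ∀ i v, ‖t i v‖ = 1

/-- A normalized rooted tree takes values in the unit sphere. -/
def NormalizedR {X : Type*} [NormedAddCommGroup X] {k : ℕ} (t : TreeR X k) : Prop :=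
  ∀ i v, ‖t i v‖ = 1

/-- `∀_{U₁} n₁ ⋯ ∀_{U_j} n_j, P(n₁,…,n_j)`. -/
def iterEventually : (j : ℕ) → (Fin j → Ultrafilter ℕ) → ((Fin j → ℕ) → Prop) → Prop
  | 0, _, P => P (fun i => i.elim0)
  | j + 1, U, P => iterEventually j (fun i => U i.castSucc)
      (fun n => ∀ᶠ a in U (Fin.last j), P (Fin.snoc n a))

/-- An unrooted tree is `Ū`-weakly null. -/
def WeaklyNullU {X : Type*} [NormedAddCommGroup X] [NormedSpace ℝ X] {k : ℕ}
    (U : Fin k → Ultrafilter ℕ) (t : TreeU X k) : Prop :=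
  ∀ i : Fin k, iterEventually i.1 (fun j => U (Fin.castLE i.isLt.le j))
    (fun pre => ∀ φ : X →L[ℝ] ℝ,
      Tendsto (fun a : ℕ => φ (t i (Fin.snoc pre a))) (U i) (𝓝 0))

/-- A rooted tree is `Ū`-weakly null. -/
def WeaklyNullR {X : Type*} [NormedAddCommGroup X] [NormedSpace ℝ X] {k : ℕ}
    (U : Fin k → Ultrafilter ℕ) (t : TreeR X k) : Prop :=
  ∀ i : Fin k, iterEventually i.1 (fun j => U (Fin.castLE i.isLt.le j))
    (fun pre => ∀ φ : X →L[ℝ] ℝ,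
      Tendsto (fun a : ℕ => φ (t i.succ (Fin.snoc pre a))) (U i) (𝓝 0))

/-- The norm `N_t^{Ū}(x ⊕ Σ aᵢ eᵢ)`. -/
noncomputable def treeNorm {X : Type*} [NormedAddCommGroup X] [NormedSpace ℝ X] {k : ℕ}
    (U : Fin k → Ultrafilter ℕ) (t : TreeU X k) (x : X) (a : Fin k → ℝ) : ℝ :=
  ultraLim k U (fun n => ‖x + ∑ i : Fin k, a i • t i (fun j => n (Fin.castLE i.isLt j))‖)

/-- The number of elements of `P` that are `≤ j`. -/
def rankIn {k : ℕ} (P : Finset (Fin k)) (j : Fin k) : ℕ :=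
  (P.filter (fun i => i ≤ j)).card

/-- The `P`-intertwining `s ⊛_P t` of two trees. -/
def intertwine {X : Type*} {l m : ℕ} (P : Finset (Fin (l + m))) (hP : P.card = l)
    (s : TreeU X l) (t : TreeU X m) : TreeU X (l + m) := fun j v =>
  let v' : Fin (l + m) → ℕ := fun p => if h : p.1 < j.1 + 1 then v ⟨p.1, h⟩ else 0
  if hj : j ∈ P then
    s ⟨rankIn P j - 1, by
        have h1 : 0 < rankIn P j :=
          Finset.card_pos.mpr ⟨j, Finset.mem_filter.mpr ⟨hj, le_refl j⟩⟩
        have h2 : rankIn P j ≤ l := (Finset.card_filter_le P _).trans hP.le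
        omega⟩
      (fun b => v' (P.orderEmbOfFin hP ⟨b.1, by
        have h1 : 0 < rankIn P j :=
          Finset.card_pos.mpr ⟨j, Finset.mem_filter.mpr ⟨hj, le_refl j⟩⟩
        have h2 : rankIn P j ≤ l := (Finset.card_filter_le P _).trans hP.le
        have h3 := b.isLt
        omega⟩))
  else
    t ⟨rankIn Pᶜ j - 1, by
        have h1 : 0 < rankIn Pᶜ j :=
          Finset.card_pos.mpr ⟨j, Finset.mem_filter.mpr ⟨Finset.mem_compl.mpr hj, le_refl j⟩⟩
        have h2 : rankIn Pᶜ j ≤ m := (Finset.card_filter_le Pᶜ _).trans (compl_card P hP).le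
        omega⟩
      (fun b => v' (Pᶜ.orderEmbOfFin (compl_card P hP) ⟨b.1, by
        have h1 : 0 < rankIn Pᶜ j :=
          Finset.card_pos.mpr ⟨j, Finset.mem_filter.mpr ⟨Finset.mem_compl.mpr hj, le_refl j⟩⟩
        have h2 : rankIn Pᶜ j ≤ m := (Finset.card_filter_le Pᶜ _).trans (compl_card P hP).le
        have h3 := b.isLt
        omega⟩))

/-- The unrooted part of a rooted tree. -/
def unroot {X : Type*} {k : ℕ} (t : TreeR X k) : TreeU X k := fun i v => t i.succ v

/-- The summing basis of `c₀`. -/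
noncomputable def summingBasis (n : ℕ) : C₀(ℕ, ℝ) :=
  ⟨⟨fun x => if x ≤ n then 1 else 0, continuous_of_discreteTopology⟩, by
    rw [cocompact_eq_cofinite, Nat.cofinite_eq_atTop]
    refine (tendsto_congr' ?_).mpr tendsto_const_nhds
    filter_upwards [eventually_gt_atTop n] with x hx
    simp [if_neg (not_le.mpr hx)]⟩

/-- The canonical map `[ℕ]^k → c₀`, `n̄ ↦ Σᵢ s_{nᵢ}`. -/
noncomputable def interMap {k : ℕ} (m : Fin k → ℕ) : C₀(ℕ, ℝ) :=
  ∑ i : Fin k, summingBasis (m i)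

/-- Krivine–Maurey stability of a metric space. -/
def StableSpace (M : Type*) [MetricSpace M] : Prop :=
  ∀ U V : Ultrafilter ℕ, FreeUF U → FreeUF V →
    ∀ x y : ℕ → M, Bornology.IsBounded (Set.range x) → Bornology.IsBounded (Set.range y) →
      limUnder (U : Filter ℕ) (fun a => limUnder (V : Filter ℕ) (fun b => dist (x a) (y b)))
        = limUnder (V : Filter ℕ) (fun b => limUnder (U : Filter ℕ) (fun a => dist (x a) (y b)))

/-! If `m₁ ≤ n₁ ≤ m₂ ≤ ⋯ ≤ m_k ≤ n_k`, take `pᵢ = min (mᵢ + 1) nᵢ`. Since the `mᵢ` are even and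
strictly increasing, `mᵢ + 1 < mᵢ₊₁`, which gives `m ≤ p` strongly; and `pᵢ ≤ nᵢ < pᵢ₊₁`
because `nᵢ ≤ mᵢ₊₁` and `nᵢ < nᵢ₊₁`. -/

theorem Nat.add_two_le_of_even_of_lt {a b : ℕ} (ha : Even a) (hb : Even b) (h : a < b) :
    a + 2 ≤ b := by
  obtain ⟨x, rfl⟩ := ha
  obtain ⟨y, rfl⟩ := hb
  omega

theorem StrongInterLE.strictMono_left {k : ℕ} {p n : Fin k → ℕ} (h : StrongInterLE p n) :
    StrictMono p := by
  cases k with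
  | zero => exact Subsingleton.strictMono p
  | succ k =>
    rw [Fin.strictMono_iff_lt_succ]
    exact fun i => (h.1 i.castSucc).trans_lt (h.2 i.1 (Nat.succ_lt_succ i.isLt))

section InterLE

variable {k : ℕ} {m n : Fin k → ℕ}

def InterLE.midpoints (m n : Fin k → ℕ) : Fin k → ℕ := fun i => min (m i + 1) (n i)

theorem InterLE.strongInterLE_midpoints (hm : StrictMono m) (hme : ∀ i, Even (m i))
    (h : InterLE m n) : StrongInterLE m (InterLE.midpoints m n) := by
  refine ⟨fun i => le_min (Nat.le_succ _) (h.1 i), fun i hi => ?_⟩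
  have hgap := Nat.add_two_le_of_even_of_lt (hme _) (hme _)
    (hm (Fin.mk_lt_mk.2 i.lt_succ_self) : m ⟨i, Nat.lt_of_succ_lt hi⟩ < m ⟨i + 1, hi⟩)
  exact (min_le_left _ _).trans_lt (by omega)

theorem InterLE.midpoints_strongInterLE (hn : StrictMono n) (h : InterLE m n) :
    StrongInterLE (InterLE.midpoints m n) n :=
  ⟨fun _ => min_le_right _ _, fun i hi =>
    lt_min (Nat.lt_succ_of_le (h.2 i hi)) (hn (Fin.mk_lt_mk.2 i.lt_succ_self))⟩

theorem InterLE.exists_strongInterLE_between (hm : StrictMono m) (hn : StrictMono n)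
    (hme : ∀ i, Even (m i)) (h : InterLE m n) :
    ∃ p : Fin k → ℕ, StrictMono p ∧ StrongInterLE m p ∧ StrongInterLE p n :=
  ⟨_, (h.midpoints_strongInterLE hn).strictMono_left, h.strongInterLE_midpoints hm hme,
    h.midpoints_strongInterLE hn⟩

end InterLE

/-- Given `k ∈ ℕ` and an interlacing pair `(m̄, n̄)` in `[2ℕ]^k`, there exists
`p̄ ∈ [ℕ]^k` such that the pairs `(m̄, p̄)` and `(n̄, p̄)` are strongly interlacing. -/
theorem stmt0 (k : ℕ) (m n : Fin k → ℕ) (hm : StrictMono m) (hn : StrictMono n)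
    (hme : ∀ i, Even (m i)) (hne : ∀ i, Even (n i)) (h : Interlacing m n) :
    ∃ p : Fin k → ℕ, StrictMono p ∧ StronglyInterlacing m p ∧ StronglyInterlacing n p := by
  rcases h with h | h
  · obtain ⟨p, hp, hmp, hpn⟩ := h.exists_strongInterLE_between hm hn hme
    exact ⟨p, hp, Or.inl hmp, Or.inr hpn⟩
  · obtain ⟨p, hp, hnp, hpm⟩ := h.exists_strongInterLE_between hn hm hne
    exact ⟨p, hp, Or.inr hpm, Or.inl hnp⟩
end

section
/- Let f : [ℕ]^k → c₀ be defined by f(n̄) = Σ_{i=1}^k s_{n_i}, where (s_n) is the summing basis of c₀ (s_n = Σ_{i=1}^n e_i with (e_i) the unit vector basis). Then for all k-element subsets m̄, n̄ of ℕ, ‖f(m̄) − f(n̄)‖_∞ ≤ d_I(m̄, n̄) ≤ 2‖f(m̄) − f(n̄)‖_∞, and moreover ‖f(m̄) − f(n̄)‖_∞ = k whenever every element of m̄ is strictly less than every element of n̄. -/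
open Filter Topology
open scoped ZeroAtInfty ENNReal NNReal

/-! Evaluating `Σᵢ s_{nᵢ}` at `x` counts the entries `nᵢ ≥ x`, so `‖f(m̄) − f(n̄)‖` is the
sup-distance of the counting functions `c_m̄, c_n̄ : ℕ → {0, …, k}`.  If `m̄, n̄` interlace, these
differ by at most `1` everywhere, and `f` is `1`-Lipschitz on the interlacing graph.  Conversely,
if `c_m̄` and `c_n̄` are `D + 1` apart, moving each entry of `m̄` towards `n̄` as far as interlacing
with `m̄` permits (and symmetrically for `n̄`) raises the smaller counting function by one wherever
they differ, so the two new tuples are neighbours of `m̄, n̄` whose counting functions are `D`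
apart; by induction `d_I(m̄, n̄) ≤ 2D`.  For `m̄ < n̄` the counting functions take the values `0`
and `k` at `x = max m̄ + 1`. -/

open Finset

section Counting

variable {k : ℕ}

def countGE (m : Fin k → ℕ) (x : ℕ) : ℕ := #{i | x ≤ m i}

lemma countGE_le (m : Fin k → ℕ) (x : ℕ) : countGE m x ≤ k :=
  (card_filter_le _ _).trans (card_univ.trans (Fintype.card_fin k)).le

lemma countGE_eq_of_forall_iff {u : Fin k → ℕ} {x c : ℕ} (hc : c ≤ k)
    (h : ∀ i : Fin k, x ≤ u i ↔ k - c ≤ i.1) : countGE u x = c := by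
  have hlt := card_filter_add_card_filter_not (s := univ) (fun i : Fin k => i.1 < k - c)
  rw [Fin.card_filter_val_lt, card_univ, Fintype.card_fin] at hlt
  simp only [countGE, h, ← not_lt]
  omega

lemma le_iff_sub_countGE_le {m : Fin k → ℕ} (hm : Monotone m) (x : ℕ) (i : Fin k) :
    x ≤ m i ↔ k - countGE m x ≤ i.1 := by
  constructor
  · intro hx
    have hsub : Ici i ⊆ ({j | x ≤ m j} : Finset (Fin k)) := fun j hj =>
      mem_filter.2 ⟨mem_univ j, hx.trans (hm (mem_Ici.1 hj))⟩
    have := card_le_card hsub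
    rw [Fin.card_Ici] at this
    unfold countGE
    omega
  · intro hi
    by_contra hx
    have hsub : ({j | x ≤ m j} : Finset (Fin k)) ⊆ Ioi i := fun j hj =>
      mem_Ioi.2 (lt_of_not_ge fun hji => hx ((mem_filter.1 hj).2.trans (hm hji)))
    have := card_le_card hsub
    rw [Fin.card_Ioi] at this
    unfold countGE at hi
    omega

lemma eq_of_countGE_eq {m n : Fin k → ℕ} (hm : Monotone m) (hn : Monotone n)
    (h : countGE m = countGE n) : m = n := by
  funext i
  apply le_antisymm
  · rw [le_iff_sub_countGE_le hn, ← h, ← le_iff_sub_countGE_le hm]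
  · rw [le_iff_sub_countGE_le hm, h, ← le_iff_sub_countGE_le hn]

lemma InterLE.countGE_le_countGE {m n : Fin k → ℕ} (h : InterLE m n) (x : ℕ) :
    countGE m x ≤ countGE n x :=
  card_le_card fun i => by
    simp only [mem_filter, mem_univ, true_and]
    exact fun hi => hi.trans (h.1 i)

lemma InterLE.countGE_le_countGE_add_one {m n : Fin k → ℕ} (hm : Monotone m) (hn : Monotone n)
    (h : InterLE m n) (x : ℕ) : countGE n x ≤ countGE m x + 1 := by
  have hn_le := countGE_le n x
  by_cases hlast : countGE n x ≤ 1
  · omega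
  have hnext : k - countGE n x + 1 < k := by omega
  have hx : x ≤ n ⟨k - countGE n x, by omega⟩ := (le_iff_sub_countGE_le hn x _).2 le_rfl
  have : k - countGE m x ≤ k - countGE n x + 1 :=
    (le_iff_sub_countGE_le hm x _).1 (hx.trans (h.2 _ hnext))
  omega

end Counting

section Step

variable {k : ℕ}

def stepToward (m n : Fin k → ℕ) (i : Fin k) : ℕ :=
  if h : i.1 + 1 < k then max (m i) (min (n i) (m ⟨i.1 + 1, h⟩)) else max (m i) (n i)

lemma le_stepToward (m n : Fin k → ℕ) (i : Fin k) : m i ≤ stepToward m n i := by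
  unfold stepToward
  split_ifs <;> exact le_max_left _ _

lemma stepToward_le_max (m n : Fin k → ℕ) (i : Fin k) :
    stepToward m n i ≤ max (m i) (n i) := by
  unfold stepToward
  split_ifs
  · exact max_le_max le_rfl (min_le_left _ _)
  · exact le_rfl

lemma stepToward_le_of_lt {m : Fin k → ℕ} (hm : Monotone m) (n : Fin k → ℕ) {i j : Fin k}
    (hij : i < j) : stepToward m n i ≤ m j := by
  have hi : i.1 + 1 < k := by omega
  rw [stepToward, dif_pos hi]
  exact max_le (hm hij.le) ((min_le_right _ _).trans (hm (Fin.mk_le_of_le_val hij)))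

lemma le_of_stepToward_eq {m : Fin k → ℕ} (hm : StrictMono m) {n : Fin k → ℕ} {i : Fin k}
    (h : stepToward m n i = m i) : n i ≤ m i := by
  unfold stepToward at h
  split_ifs at h with hi
  · have hnext : m i < m ⟨i.1 + 1, hi⟩ := hm (Fin.mk_lt_mk.2 i.1.lt_succ_self)
    have := max_eq_left_iff.1 h
    omega
  · exact max_eq_left_iff.1 h

lemma interLE_stepToward {m : Fin k → ℕ} (hm : Monotone m) (n : Fin k → ℕ) :
    InterLE m (stepToward m n) :=
  ⟨le_stepToward m n, fun i _ => stepToward_le_of_lt hm n (Fin.mk_lt_mk.2 i.lt_succ_self)⟩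

lemma strictMono_stepToward {m n : Fin k → ℕ} (hm : StrictMono m) (hn : StrictMono n) :
    StrictMono (stepToward m n) := by
  intro i j hij
  rcases (le_stepToward m n j).lt_or_eq with hlt | heq
  · exact (stepToward_le_of_lt hm.monotone n hij).trans_lt hlt
  · calc stepToward m n i ≤ max (m i) (n i) := stepToward_le_max m n i
      _ < m j := max_lt (hm hij) ((hn hij).trans_le (le_of_stepToward_eq hm heq.symm))
      _ = stepToward m n j := heq

lemma le_stepToward_iff {m : Fin k → ℕ} (hm : Monotone m) (n : Fin k → ℕ) (x : ℕ) (i : Fin k) :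
    x ≤ stepToward m n i ↔ x ≤ m i ∨ x ≤ n i ∧ k - countGE m x ≤ i.1 + 1 := by
  unfold stepToward
  split_ifs with hi
  · rw [le_max_iff, le_min_iff, le_iff_sub_countGE_le hm x ⟨i.1 + 1, hi⟩]
  · have : k - countGE m x ≤ i.1 + 1 := by omega
    simp only [le_max_iff, this, and_true]

lemma countGE_stepToward {m n : Fin k → ℕ} (hm : Monotone m) (hn : Monotone n) (x : ℕ) :
    countGE (stepToward m n) x =
      if countGE m x < countGE n x then countGE m x + 1 else countGE m x := by
  have hm_le := countGE_le m x
  have hn_le := countGE_le n x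
  apply countGE_eq_of_forall_iff (by split_ifs <;> omega)
  intro i
  rw [le_stepToward_iff hm, le_iff_sub_countGE_le hm, le_iff_sub_countGE_le hn]
  split_ifs <;> omega

end Step

lemma SimpleGraph.Walk.dist_le_length {V α : Type*} [PseudoMetricSpace α] {G : SimpleGraph V}
    (f : V → α) (hf : ∀ u v, G.Adj u v → Dist.dist (f u) (f v) ≤ 1) {u v : V} (p : G.Walk u v) :
    Dist.dist (f u) (f v) ≤ p.length := by
  induction p with
  | nil => simp
  | @cons a b c hab p ih =>
    rw [length_cons, Nat.cast_succ]
    linarith [dist_triangle (f a) (f b) (f c), hf a b hab]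

lemma SimpleGraph.Reachable.dist_le_dist {V α : Type*} [PseudoMetricSpace α] {G : SimpleGraph V}
    (f : V → α) (hf : ∀ u v, G.Adj u v → Dist.dist (f u) (f v) ≤ 1) {u v : V}
    (h : G.Reachable u v) :
    Dist.dist (f u) (f v) ≤ G.dist u v := by
  obtain ⟨p, hp⟩ := h.exists_walk_length_eq_dist
  exact hp ▸ p.dist_le_length f hf

namespace interGraph

variable {k : ℕ}

lemma exists_walk_length_le_one {m n : IncTuple k} (h : InterLE m.1 n.1) :
    ∃ p : (interGraph k).Walk m n, p.length ≤ 1 := by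
  by_cases hmn : m = n
  · subst hmn
    exact ⟨.nil, zero_le_one⟩
  · exact ⟨.cons ⟨hmn, .inl h⟩ .nil, le_rfl⟩

lemma exists_walk_length_le (D : ℕ) (m n : IncTuple k)
    (h : ∀ x, countGE m.1 x ≤ countGE n.1 x + D ∧ countGE n.1 x ≤ countGE m.1 x + D) :
    ∃ p : (interGraph k).Walk m n, p.length ≤ 2 * D := by
  induction D generalizing m n with
  | zero =>
    have hmn : m = n := Subtype.ext <| eq_of_countGE_eq m.2.monotone n.2.monotone <|
      funext fun x => by have := h x; omega
    exact hmn ▸ ⟨.nil, le_rfl⟩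
  | succ D ih =>
    let m' : IncTuple k := ⟨stepToward m.1 n.1, strictMono_stepToward m.2 n.2⟩
    let n' : IncTuple k := ⟨stepToward n.1 m.1, strictMono_stepToward n.2 m.2⟩
    obtain ⟨p, hp⟩ := ih m' n' fun x => by
      have := h x
      simp only [m', n', countGE_stepToward m.2.monotone n.2.monotone,
        countGE_stepToward n.2.monotone m.2.monotone]
      split_ifs <;> omega
    obtain ⟨q, hq⟩ := exists_walk_length_le_one (n := m') (interLE_stepToward m.2.monotone n.1)
    obtain ⟨r, hr⟩ := exists_walk_length_le_one (n := n') (interLE_stepToward n.2.monotone m.1)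
    refine ⟨q.append (p.append r.reverse), ?_⟩
    simp only [SimpleGraph.Walk.length_append, SimpleGraph.Walk.length_reverse]
    omega

end interGraph

lemma ZeroAtInftyContinuousMap.norm_le_iff {α β : Type*} [TopologicalSpace α]
    [SeminormedAddCommGroup β] (f : C₀(α, β)) {C : ℝ} (hC : 0 ≤ C) :
    ‖f‖ ≤ C ↔ ∀ x, ‖f x‖ ≤ C :=
  BoundedContinuousFunction.norm_le hC

lemma ZeroAtInftyContinuousMap.norm_coe_le_norm {α β : Type*} [TopologicalSpace α]
    [SeminormedAddCommGroup β] (f : C₀(α, β)) (x : α) : ‖f x‖ ≤ ‖f‖ :=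
  f.toBCF.norm_coe_le_norm x

lemma abs_natCast_sub_le_iff {a b D : ℕ} :
    |(a : ℝ) - b| ≤ D ↔ a ≤ b + D ∧ b ≤ a + D := by
  rw [abs_sub_le_iff, sub_le_iff_le_add, sub_le_iff_le_add]
  norm_cast
  omega

lemma le_add_floor_of_abs_natCast_sub_le {a b : ℕ} {r : ℝ} (h : |(a : ℝ) - b| ≤ r) :
    a ≤ b + ⌊r⌋₊ := by
  have hr : 0 ≤ r := (abs_nonneg _).trans h
  rw [← Nat.sub_le_iff_le_add', Nat.le_floor_iff hr]
  rcases le_total b a with hba | hab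
  · rw [Nat.cast_sub hba]
    exact (le_abs_self _).trans h
  · rw [Nat.sub_eq_zero_of_le hab, Nat.cast_zero]
    exact hr

section SummingBasis

variable {k : ℕ}

lemma interMap_apply (m : Fin k → ℕ) (x : ℕ) : interMap m x = countGE m x := by
  let eval : C₀(ℕ, ℝ) →+ ℝ := ⟨⟨fun f => f x, rfl⟩, fun _ _ => rfl⟩
  change eval (∑ i, summingBasis (m i)) = _
  rw [map_sum, countGE, natCast_card_filter]
  rfl

lemma norm_interMap_sub_le_iff (m n : Fin k → ℕ) {C : ℝ} (hC : 0 ≤ C) :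
    ‖interMap m - interMap n‖ ≤ C ↔ ∀ x, |(countGE m x : ℝ) - countGE n x| ≤ C := by
  simp only [ZeroAtInftyContinuousMap.norm_le_iff _ hC, ZeroAtInftyContinuousMap.sub_apply,
    interMap_apply, Real.norm_eq_abs]

lemma dist_interMap_le_one_of_adj {m n : IncTuple k} (h : (interGraph k).Adj m n) :
    dist (interMap m.1) (interMap n.1) ≤ 1 := by
  rw [dist_eq_norm, ← Nat.cast_one, norm_interMap_sub_le_iff _ _ (Nat.cast_nonneg _)]
  intro x
  rw [abs_natCast_sub_le_iff]
  rcases h.2 with hmn | hnm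
  · exact ⟨by have := hmn.countGE_le_countGE x; omega,
      hmn.countGE_le_countGE_add_one m.2.monotone n.2.monotone x⟩
  · exact ⟨hnm.countGE_le_countGE_add_one n.2.monotone m.2.monotone x,
      by have := hnm.countGE_le_countGE x; omega⟩

lemma norm_interMap_sub_of_ordLT {m n : IncTuple k} (h : ordLT m n) :
    ‖interMap m.1 - interMap n.1‖ = k := by
  apply le_antisymm
  · refine (norm_interMap_sub_le_iff _ _ (Nat.cast_nonneg _)).2 fun x => ?_
    have := countGE_le m.1 x
    have := countGE_le n.1 x
    rw [abs_natCast_sub_le_iff]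
    omega
  cases k with
  | zero => simp
  | succ k =>
    let x := m.1 (Fin.last k) + 1
    have hm : countGE m.1 x = 0 := countGE_eq_of_forall_iff (Nat.zero_le _) fun i => by
      have := m.2.monotone (Fin.le_last i)
      omega
    have hn : countGE n.1 x = k + 1 := countGE_eq_of_forall_iff le_rfl fun i => by
      have := h (Fin.last k) i
      omega
    have := (interMap m.1 - interMap n.1).norm_coe_le_norm x
    rwa [ZeroAtInftyContinuousMap.sub_apply, interMap_apply, interMap_apply, hm, hn,
      Real.norm_eq_abs, abs_sub_comm, Nat.cast_zero, sub_zero, abs_of_nonneg (Nat.cast_nonneg _)]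
      at this

end SummingBasis

/-- The summing-basis map `f(n̄) = Σᵢ s_{nᵢ}` into `c₀` satisfies
`‖f(m̄) − f(n̄)‖ ≤ d_I(m̄, n̄) ≤ 2‖f(m̄) − f(n̄)‖`, and `‖f(m̄) − f(n̄)‖ = k` whenever
every element of `m̄` is strictly below every element of `n̄`. -/
theorem stmt2 (k : ℕ) (m n : IncTuple k) :
    ‖interMap m.1 - interMap n.1‖ ≤ (dI m n : ℝ) ∧
    (dI m n : ℝ) ≤ 2 * ‖interMap m.1 - interMap n.1‖ ∧
    (ordLT m n → ‖interMap m.1 - interMap n.1‖ = k) := by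
  -- `SimpleGraph.dist` is `0` between unreachable vertices, so connectivity is needed first.
  have hreach : (interGraph k).Reachable m n := by
    obtain ⟨p, -⟩ := interGraph.exists_walk_length_le k m n fun x => by
      have := countGE_le m.1 x
      have := countGE_le n.1 x
      omega
    exact p.reachable
  refine ⟨?_, ?_, norm_interMap_sub_of_ordLT⟩
  · rw [← dist_eq_norm]
    exact hreach.dist_le_dist (fun v : IncTuple k => interMap v.1) fun _ _ h =>
      dist_interMap_le_one_of_adj h
  · set r := ‖interMap m.1 - interMap n.1‖
    have hcount := (norm_interMap_sub_le_iff m.1 n.1 (norm_nonneg _)).1 le_rfl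
    obtain ⟨p, hp⟩ := interGraph.exists_walk_length_le ⌊r⌋₊ m n fun x =>
      ⟨le_add_floor_of_abs_natCast_sub_le (hcount x),
        le_add_floor_of_abs_natCast_sub_le ((abs_sub_comm _ _).trans_le (hcount x))⟩
    calc (dI m n : ℝ) ≤ p.length := Nat.cast_le.2 (SimpleGraph.dist_le p)
      _ ≤ 2 * ⌊r⌋₊ := by exact_mod_cast hp
      _ ≤ 2 * r := by gcongr; exact Nat.floor_le (norm_nonneg _)
end

section
/- For any two adjacent vertices m̄, n̄ in the interlacing graph on [ℕ]^k, the map f(n̄) = Σ_{i=1}^k s_{n_i} into c₀ satisfies ‖f(m̄) − f(n̄)‖_∞ = 1; hence f is 1-Lipschitz from ([ℕ]^k, d_I) to c₀. -/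
open Filter Topology
open scoped ZeroAtInfty ENNReal NNReal

/-! If `m₁ ≤ n₁ ≤ m₂ ≤ ⋯ ≤ m_k ≤ n_k`, then `f(n̄) - f(m̄) = Σᵢ 1_{(mᵢ, nᵢ]}`, and the intervals
`(mᵢ, nᵢ]` are pairwise disjoint, so for `m̄ ≠ n̄` the difference is a nonzero `0`–`1` sequence
and has sup norm `1`. Summing along a geodesic gives the Lipschitz bound, once the interlacing
graph is known to be connected: consecutive length-`k` windows of a strictly increasing sequence
interlace, and continuing both `m̄` and `n̄` by the same tail `N + j` (with `N` large) joins them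
to a common window. -/

open Finset

theorem summingBasis_apply (n x : ℕ) : summingBasis n x = if x ≤ n then 1 else 0 := rfl

theorem summingBasis_sub_summingBasis_apply {a b : ℕ} (hab : a ≤ b) (x : ℕ) :
    summingBasis b x - summingBasis a x = if x ∈ Set.Ioc a b then 1 else 0 := by
  simp only [summingBasis_apply, Set.mem_Ioc]
  by_cases hxa : x ≤ a
  · simp [hxa, hxa.trans hab]
  · by_cases hxb : x ≤ b <;> simp [hxa, hxb]

theorem interMap_sub_interMap_apply {k : ℕ} (m n : Fin k → ℕ) (x : ℕ) :
    (interMap n - interMap m) x = ∑ i, (summingBasis (n i) x - summingBasis (m i) x) := by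
  rw [interMap, interMap, ← Finset.sum_sub_distrib]
  exact map_sum (⟨⟨fun g : C₀(ℕ, ℝ) => g x, rfl⟩, fun _ _ => rfl⟩ : C₀(ℕ, ℝ) →+ ℝ) _ _

namespace InterLE

variable {k : ℕ} {m n : Fin k → ℕ}

theorem le_of_lt (h : InterLE m n) (hm : Monotone m) {i j : Fin k} (hij : i < j) :
    n i ≤ m j :=
  (h.2 i (by omega)).trans (hm (Fin.le_def.2 (by simpa using hij)))

theorem interMap_sub_interMap_apply (h : InterLE m n) (x : ℕ) :
    (interMap n - interMap m) x = #{i | x ∈ Set.Ioc (m i) (n i)} := by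
  simp [_root_.interMap_sub_interMap_apply, summingBasis_sub_summingBasis_apply (h.1 _),
    Finset.sum_boole]

theorem card_filter_mem_Ioc_le_one (h : InterLE m n) (hm : Monotone m) (x : ℕ) :
    #{i | x ∈ Set.Ioc (m i) (n i)} ≤ 1 := by
  refine Finset.card_le_one.2 fun i hi j hj => ?_
  simp only [Finset.mem_filter, Finset.mem_univ, true_and, Set.mem_Ioc] at hi hj
  by_contra hne
  rcases lt_or_gt_of_ne hne with hij | hji
  · exact absurd (hi.2.trans (h.le_of_lt hm hij)) hj.1.not_ge
  · exact absurd (hj.2.trans (h.le_of_lt hm hji)) hi.1.not_ge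

theorem norm_interMap_sub_interMap (h : InterLE m n) (hm : Monotone m) (hne : m ≠ n) :
    ‖interMap n - interMap m‖ = 1 := by
  obtain ⟨i, hi⟩ := Function.ne_iff.1 hne
  refine le_antisymm ((BoundedContinuousFunction.norm_le zero_le_one).2 fun x => ?_) ?_
  · change ‖(interMap n - interMap m) x‖ ≤ 1
    rw [h.interMap_sub_interMap_apply, Real.norm_natCast]
    exact_mod_cast h.card_filter_mem_Ioc_le_one hm x
  · have hmem : i ∈ ({j | n i ∈ Set.Ioc (m j) (n j)} : Finset (Fin k)) := by
      simpa using lt_of_le_of_ne (h.1 i) hi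
    calc (1 : ℝ) ≤ (interMap n - interMap m) (n i) := by
          rw [h.interMap_sub_interMap_apply]
          exact_mod_cast Finset.card_pos.2 ⟨i, hmem⟩
      _ ≤ ‖interMap n - interMap m‖ := (le_abs_self _).trans
          ((interMap n - interMap m).toBCF.norm_coe_le_norm _)

end InterLE

theorem dist_le_length_of_adj {V E : Type*} [PseudoMetricSpace E]
    {G : SimpleGraph V} {f : V → E} (hf : ∀ u v, G.Adj u v → dist (f u) (f v) ≤ 1) :
    ∀ {u v : V} (p : G.Walk u v), dist (f u) (f v) ≤ p.length
  | _, _, .nil => by simp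
  | u, w, .cons (v := v) huv p => by
    calc dist (f u) (f w) ≤ dist (f u) (f v) + dist (f v) (f w) := dist_triangle _ _ _
      _ ≤ 1 + p.length := add_le_add (hf u v huv) (dist_le_length_of_adj hf p)
      _ = (p.cons huv).length := by push_cast [SimpleGraph.Walk.length_cons]; ring

theorem dist_le_graph_dist_of_adj {V E : Type*} [PseudoMetricSpace E]
    {G : SimpleGraph V} {f : V → E} (hf : ∀ u v, G.Adj u v → dist (f u) (f v) ≤ 1)
    {u v : V} (h : G.Reachable u v) : dist (f u) (f v) ≤ G.dist u v := by
  obtain ⟨p, hp⟩ := h.exists_walk_length_eq_dist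
  exact hp ▸ dist_le_length_of_adj hf p

theorem interGraph_reachable_of_interlacing {k : ℕ} {m n : IncTuple k}
    (h : Interlacing m.1 n.1) : (interGraph k).Reachable m n := by
  by_cases hmn : m = n
  · exact hmn ▸ SimpleGraph.Reachable.refl m
  · exact SimpleGraph.Adj.reachable ⟨hmn, h⟩

def window (k : ℕ) {s : ℕ → ℕ} (hs : StrictMono s) (t : ℕ) : IncTuple k :=
  ⟨fun i => s (i + t), fun _ _ hij => hs (by simpa using hij)⟩

theorem interGraph_reachable_window {k : ℕ} {s : ℕ → ℕ} (hs : StrictMono s) (t : ℕ) :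
    (interGraph k).Reachable (window k hs 0) (window k hs t) := by
  induction t with
  | zero => rfl
  | succ t ih =>
    refine ih.trans (interGraph_reachable_of_interlacing (Or.inl ⟨fun i => ?_, fun i _ => ?_⟩))
    · exact hs.monotone (Nat.le_succ _)
    · exact le_of_eq (congrArg s (by simp only; omega))

def extendTuple {k : ℕ} (m : Fin k → ℕ) (N j : ℕ) : ℕ :=
  if h : j < k then m ⟨j, h⟩ else N + j

theorem strictMono_extendTuple {k : ℕ} {m : Fin k → ℕ} (hm : StrictMono m) {N : ℕ}
    (hN : ∀ i, m i < N) : StrictMono (extendTuple m N) := by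
  refine strictMono_nat_of_lt_succ fun j => ?_
  unfold extendTuple
  by_cases hj : j + 1 < k
  · rw [dif_pos hj, dif_pos (by omega)]
    exact hm (Fin.mk_lt_mk.2 (Nat.lt_succ_self j))
  · rw [dif_neg hj]
    split_ifs with hj'
    · exact (hN _).trans_le (Nat.le_add_right _ _)
    · omega

theorem interGraph_preconnected (k : ℕ) : (interGraph k).Preconnected := by
  intro m n
  obtain ⟨N, hN⟩ := (Set.finite_range fun i => max (m.1 i) (n.1 i)).bddAbove
  have hlt : ∀ i, m.1 i < N + 1 ∧ n.1 i < N + 1 := fun i => by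
    have := max_le_iff.1 (hN ⟨i, rfl⟩)
    omega
  have hsm := strictMono_extendTuple m.2 fun i => (hlt i).1
  have hsn := strictMono_extendTuple n.2 fun i => (hlt i).2
  have hm : window k hsm 0 = m := Subtype.ext <| funext fun i => by simp [window, extendTuple]
  have hn : window k hsn 0 = n := Subtype.ext <| funext fun i => by simp [window, extendTuple]
  have hfar : window k hsm k = window k hsn k :=
    Subtype.ext <| funext fun i => by simp [window, extendTuple]
  rw [← hm, ← hn]
  exact (interGraph_reachable_window hsm k).trans
    (hfar ▸ (interGraph_reachable_window hsn k).symm)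

theorem interGraph_adj_norm_interMap_sub_interMap {k : ℕ} {m n : IncTuple k}
    (h : (interGraph k).Adj m n) : ‖interMap m.1 - interMap n.1‖ = 1 := by
  obtain ⟨hne, hmn | hnm⟩ := h
  · rw [norm_sub_rev]
    exact hmn.norm_interMap_sub_interMap m.2.monotone (Subtype.coe_injective.ne hne)
  · exact hnm.norm_interMap_sub_interMap n.2.monotone (Subtype.coe_injective.ne hne.symm)

/-- For adjacent vertices of the interlacing graph, the summing-basis map
`f(n̄) = Σᵢ s_{nᵢ}` into `c₀` satisfies `‖f(m̄) − f(n̄)‖ = 1`; hence `f` is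
`1`-Lipschitz from `([ℕ]^k, d_I)` to `c₀`. -/
theorem stmt3 (k : ℕ) :
    (∀ m n : IncTuple k, (interGraph k).Adj m n → ‖interMap m.1 - interMap n.1‖ = 1) ∧
    (∀ m n : IncTuple k, ‖interMap m.1 - interMap n.1‖ ≤ (dI m n : ℝ)) := by
  have hadj : ∀ m n : IncTuple k, (interGraph k).Adj m n →
      ‖interMap m.1 - interMap n.1‖ = 1 := fun m n => interGraph_adj_norm_interMap_sub_interMap
  refine ⟨hadj, fun m n => ?_⟩
  have := dist_le_graph_dist_of_adj (f := fun m : IncTuple k => interMap m.1)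
    (fun u v h => (dist_eq_norm _ _).trans_le (hadj u v h).le) (interGraph_preconnected k m n)
  rwa [dist_eq_norm] at this
end

section
/- For any infinite-dimensional Banach space X, the property Q modulus satisfies q_X ≤ 1. More precisely, for any δ > 1 there exists a map f : ℕ → X such that 1 < ‖f(m) − f(n)‖ < δ for all m < n; consequently X fails the Q(1, δ)-property for every δ > 1. -/
open Filter Topology
open scoped ZeroAtInfty ENNReal NNReal

/-- An approximate Ramsey theorem for pairs: `L` is the iterated limit `lim_m lim_n d m n` along
a nonprincipal ultrafilter. -/
theorem exists_strictMono_forall_dist_lt {α : Type*} [PseudoMetricSpace α] {K : Set α}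
    (hK : IsCompact K) {d : ℕ → ℕ → α} (hd : ∀ m n, m < n → d m n ∈ K) {ε : ℝ} (hε : 0 < ε) :
    ∃ L ∈ K, ∃ a : ℕ → ℕ, StrictMono a ∧ ∀ m n, m < n → dist (d (a m) (a n)) L < ε := by
  set U := hyperfilter ℕ
  have eventually_gt : ∀ m, ∀ᶠ n in (U : Filter ℕ), m < n := fun m =>
    hyperfilter_le_cofinite (Nat.cofinite_eq_atTop ▸ eventually_gt_atTop m)
  have row_limit : ∀ m, ∃ ℓ ∈ K, Tendsto (d m) U (𝓝 ℓ) := fun m =>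
    hK.ultrafilter_le_nhds' (U.map (d m)) ((eventually_gt m).mono (hd m))
  choose ℓ hℓK hℓ using row_limit
  obtain ⟨L, hLK, hL⟩ := hK.ultrafilter_le_nhds' (U.map ℓ)
    (Eventually.of_forall (f := (U : Filter ℕ)) hℓK)
  obtain ⟨a, -, ha⟩ := exists_seq_of_forall_finset_exists (fun m => dist (ℓ m) L < ε / 2)
    (fun m n => m < n ∧ dist (d m n) L < ε) <| by
      intro s hs
      have close_row : ∀ᶠ y in (U : Filter ℕ), dist (ℓ y) L < ε / 2 :=
        Metric.tendsto_nhds.mp hL _ (half_pos hε)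
      have close_entries : ∀ᶠ y in (U : Filter ℕ), ∀ m ∈ s, m < y ∧ dist (d m y) (ℓ m) < ε / 2 :=
        (eventually_all_finset s).2 fun m _ =>
          (eventually_gt m).and (Metric.tendsto_nhds.mp (hℓ m) _ (half_pos hε))
      obtain ⟨y, hyL, hy⟩ := (close_row.and close_entries).exists
      refine ⟨y, hyL, fun m hm => ⟨(hy m hm).1, ?_⟩⟩
      calc dist (d m y) L ≤ dist (d m y) (ℓ m) + dist (ℓ m) L := dist_triangle _ _ _
        _ < ε / 2 + ε / 2 := add_lt_add (hy m hm).2 (hs m hm)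
        _ = ε := add_halves ε
  exact ⟨L, hLK, a, strictMono_nat_of_lt_succ fun n => (ha n (n + 1) n.lt_succ_self).1,
    fun m n h => (ha m n h).2⟩

/-- Riesz's lemma gives a bounded `1`-separated sequence; a subsequence whose distances are all
`ε`-close to some `L ≥ 1`, rescaled by `(L - ε)⁻¹`, works as soon as `L + ε < δ (L - ε)`. -/
theorem exists_seq_one_lt_norm_sub_lt {X : Type*} [NormedAddCommGroup X] [NormedSpace ℝ X]
    (hX : ¬ FiniteDimensional ℝ X) {δ : ℝ} (hδ : 1 < δ) :
    ∃ f : ℕ → X, ∀ m n : ℕ, m < n → 1 < ‖f m - f n‖ ∧ ‖f m - f n‖ < δ := by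
  obtain ⟨R, x, -, hxR, hsep⟩ := exists_seq_norm_le_one_le_norm_sub hX
  set ε := (δ - 1) / (2 * (δ + 1)) with hε
  have hε_pos : 0 < ε := div_pos (by linarith) (by linarith)
  have hε_mul : ε * (δ + 1) = (δ - 1) / 2 := by rw [hε]; field_simp
  have hdist_mem : ∀ m n, m < n → ‖x m - x n‖ ∈ Set.Icc 1 (2 * R) := fun m n h =>
    ⟨hsep h.ne, (norm_sub_le _ _).trans (by linarith [hxR m, hxR n])⟩
  obtain ⟨L, ⟨hL1, -⟩, a, -, ha⟩ :=
    exists_strictMono_forall_dist_lt isCompact_Icc hdist_mem hε_pos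
  have hLε : 0 < L - ε := by nlinarith
  refine ⟨fun n => (L - ε)⁻¹ • x (a n), fun m n hmn => ?_⟩
  obtain ⟨hlow, hupp⟩ := abs_lt.1 (Real.dist_eq _ _ ▸ ha m n hmn)
  rw [← smul_sub, norm_smul, norm_inv, Real.norm_of_nonneg hLε.le,
    lt_inv_mul_iff₀ hLε, inv_mul_lt_iff₀ hLε]
  constructor <;> nlinarith

def IncTuple.single (p : ℕ) : IncTuple 1 :=
  ⟨fun _ => p, fun i j h => absurd (Subsingleton.elim i j) h.ne⟩

theorem IncTuple.ext_one {m n : IncTuple 1} (h : m.1 0 = n.1 0) : m = n :=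
  Subtype.ext <| funext fun i => Fin.fin_one_eq_zero i ▸ h

theorem interGraph_one_adj {m n : IncTuple 1} (h : m ≠ n) : (interGraph 1).Adj m n := by
  refine ⟨h, ?_⟩
  rcases le_total (m.1 0) (n.1 0) with hle | hle
  · exact Or.inl ⟨fun i => Fin.fin_one_eq_zero i ▸ hle, fun i hi => by omega⟩
  · exact Or.inr ⟨fun i => Fin.fin_one_eq_zero i ▸ hle, fun i hi => by omega⟩

theorem dI_one_of_ne {m n : IncTuple 1} (h : m ≠ n) : dI m n = 1 :=
  SimpleGraph.dist_eq_one_iff_adj.mpr (interGraph_one_adj h)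

/-- On the complete graph `[ℕ]^1` such a sequence is `δ`-Lipschitz, yet no two of its values are
`ε`-close. -/
theorem not_hasQProp_of_seq {M : Type*} [MetricSpace M] {ε δ : ℝ} (f : ℕ → M)
    (hf : ∀ m n, m < n → ε ≤ dist (f m) (f n) ∧ dist (f m) (f n) ≤ δ) :
    ¬ HasQProp M ε δ := by
  intro hQ
  have lipschitz : ∀ m n : IncTuple 1, dist (f (m.1 0)) (f (n.1 0)) ≤ δ * dI m n := by
    intro m n
    by_cases hmn : m = n
    · simp [hmn, dI]
    rw [dI_one_of_ne hmn, Nat.cast_one, mul_one]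
    rcases Ne.lt_or_gt (mt IncTuple.ext_one hmn) with h | h
    · exact (hf _ _ h).2
    · exact dist_comm (f (m.1 0)) _ ▸ (hf _ _ h).2
  obtain ⟨L, hL, hLf⟩ := hQ 1 (fun m => f (m.1 0)) lipschitz
  obtain ⟨p, hp⟩ := hL.nonempty
  obtain ⟨q, hq, hpq⟩ := hL.exists_gt p
  exact (hLf (.single p) (.single q) (fun _ => hp) (fun _ => hq) (fun _ _ => hpq)).not_ge
    (hf p q hpq).1

theorem qMod_le_deltaMod_one (M : Type*) [MetricSpace M] : qMod M ≤ DeltaMod M 1 :=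
  Real.sSup_le (fun _ hc => by simpa using hc.2 1 one_pos)
    (Real.sSup_nonneg fun _ hδ => hδ.1)

theorem deltaMod_le_of_forall_not_hasQProp {M : Type*} [MetricSpace M] {ε c : ℝ} (hc : 0 ≤ c)
    (h : ∀ δ, c < δ → ¬ HasQProp M ε δ) : DeltaMod M ε ≤ c :=
  Real.sSup_le (fun δ hδ => not_lt.1 fun hlt => h δ hlt hδ.2) hc

theorem stmt4_general (X : Type*) [NormedAddCommGroup X] [NormedSpace ℝ X]
    (hX : ¬ FiniteDimensional ℝ X) :
    qMod X ≤ 1 ∧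
    ∀ δ : ℝ, 1 < δ →
      (∃ f : ℕ → X, ∀ m n : ℕ, m < n → 1 < ‖f m - f n‖ ∧ ‖f m - f n‖ < δ) ∧
      ¬ HasQProp X 1 δ := by
  have not_Q : ∀ δ, 1 < δ → ¬ HasQProp X 1 δ := by
    intro δ hδ
    obtain ⟨f, hf⟩ := exists_seq_one_lt_norm_sub_lt hX hδ
    refine not_hasQProp_of_seq f fun m n h => ?_
    rw [dist_eq_norm]
    exact ⟨(hf m n h).1.le, (hf m n h).2.le⟩
  exact ⟨(qMod_le_deltaMod_one X).trans (deltaMod_le_of_forall_not_hasQProp zero_le_one not_Q),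
    fun δ hδ => ⟨exists_seq_one_lt_norm_sub_lt hX hδ, not_Q δ hδ⟩⟩

/-- For an infinite-dimensional Banach space `X`, `q_X ≤ 1`: for every `δ > 1` there is
`f : ℕ → X` with `1 < ‖f m − f n‖ < δ` for all `m < n`, and consequently `X` fails the
`Q(1, δ)`-property for every `δ > 1`. -/
theorem stmt4 (X : Type*) [NormedAddCommGroup X] [NormedSpace ℝ X] [CompleteSpace X]
    (hX : ¬ FiniteDimensional ℝ X) :
    qMod X ≤ 1 ∧
    ∀ δ : ℝ, 1 < δ →
      (∃ f : ℕ → X, ∀ m n : ℕ, m < n → 1 < ‖f m - f n‖ ∧ ‖f m - f n‖ < δ) ∧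
      ¬ HasQProp X 1 δ :=
  stmt4_general X hX
end

section
/- Let X be a Banach space, k ∈ ℕ, Ū = (U₁,...,U_k) a sequence of free ultrafilters on ℕ, and t a normalized Ū-weakly null unrooted tree in X of height k. Then the function N_t^Ū(x ⊕ Σ a_i e_i) = lim_{n₁,U₁} ... lim_{n_k,U_k} ‖x + Σ_{i=1}^k a_i t(n₁,...,n_i)‖ on X ⊕ ℝ^k satisfies N_t^Ū(x ⊕ Σ_{i=1}^j a_i e_i) ≤ N_t^Ū(x ⊕ Σ_{i=1}^k a_i e_i) for all 0 ≤ j ≤ k, x ∈ X and (a_i) ∈ ℝ^k. -/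
open Filter Topology
open scoped ZeroAtInfty ENNReal NNReal

/-!
A weakly null sequence cannot lower a norm in the limit: if `v_b → 0` weakly along `U` and
`φ` norms `y`, then `‖y‖ = lim φ(y + v_b) ≤ lim ‖y + v_b‖`. Adding the term
`a_{j+1} t(n₁,…,n_{j+1})` to `x + ∑_{i ≤ j} aᵢ t(n₁,…,nᵢ)` and taking the limit along `U_{j+1}`
first is such a perturbation, so each truncation of `a` is dominated by the next one.
-/

section UltrafilterLimits

variable {α : Type*}

lemma exists_tendsto_of_abs_le (U : Ultrafilter α) {f : α → ℝ} {C : ℝ}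
    (hf : ∀ n, |f n| ≤ C) : ∃ c, |c| ≤ C ∧ Tendsto f U (𝓝 c) := by
  have hmem : (Ultrafilter.map f U : Filter ℝ) ≤ 𝓟 (Set.Icc (-C) C) := by
    rw [Ultrafilter.coe_map, le_principal_iff, mem_map]
    exact univ_mem' fun n => Set.mem_Icc.mpr (abs_le.mp (hf n))
  obtain ⟨c, hc, hle⟩ := isCompact_Icc.ultrafilter_le_nhds (Ultrafilter.map f U) hmem
  exact ⟨c, abs_le.mpr (Set.mem_Icc.mp hc), hle⟩

lemma tendsto_limUnder_of_abs_le (U : Ultrafilter α) {f : α → ℝ} {C : ℝ}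
    (hf : ∀ n, |f n| ≤ C) : Tendsto f U (𝓝 (limUnder U f)) :=
  let ⟨_, _, h⟩ := exists_tendsto_of_abs_le U hf
  tendsto_nhds_limUnder ⟨_, h⟩

lemma abs_limUnder_le (U : Ultrafilter α) {f : α → ℝ} {C : ℝ} (hf : ∀ n, |f n| ≤ C) :
    |limUnder U f| ≤ C := by
  obtain ⟨c, hc, h⟩ := exists_tendsto_of_abs_le U hf
  rwa [h.limUnder_eq]

lemma iterEventually.mono {j : ℕ} {U : Fin j → Ultrafilter ℕ} {P Q : (Fin j → ℕ) → Prop}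
    (hP : iterEventually j U P) (h : ∀ n, P n → Q n) : iterEventually j U Q := by
  induction j with
  | zero => exact h _ hP
  | succ j ih => exact ih hP fun n hn => hn.mono fun b hb => h _ hb

-- Without the bounds the inner `limUnder`s could be junk values.
lemma ultraLim_mono {j : ℕ} {U : Fin j → Ultrafilter ℕ} {F G : (Fin j → ℕ) → ℝ} {C : ℝ}
    (hF : ∀ n, |F n| ≤ C) (hG : ∀ n, |G n| ≤ C)
    (h : iterEventually j U fun n => F n ≤ G n) : ultraLim j U F ≤ ultraLim j U G := by
  induction j with
  | zero => exact h
  | succ j ih =>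
    refine ih (fun n => abs_limUnder_le _ fun b => hF _)
      (fun n => abs_limUnder_le _ fun b => hG _)
      (iterEventually.mono (U := fun i => U i.castSucc) h fun n hn => ?_)
    exact le_of_tendsto_of_tendsto (tendsto_limUnder_of_abs_le _ fun b => hF _)
      (tendsto_limUnder_of_abs_le _ fun b => hG _) hn

lemma ultraLim_comp_castSucc (j : ℕ) (U : Fin (j + 1) → Ultrafilter ℕ)
    (F : (Fin j → ℕ) → ℝ) :
    ultraLim (j + 1) U (fun n => F fun i => n i.castSucc)
      = ultraLim j (fun i => U i.castSucc) F := by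
  show ultraLim j _ _ = _
  congr 1
  funext n
  simp only [Fin.snoc_castSucc]
  exact tendsto_const_nhds.limUnder_eq

lemma ultraLim_comp_castLE {j k : ℕ} (h : j ≤ k) (U : Fin k → Ultrafilter ℕ)
    (F : (Fin j → ℕ) → ℝ) :
    ultraLim k U (fun n => F fun i => n (Fin.castLE h i))
      = ultraLim j (fun i => U (Fin.castLE h i)) F := by
  induction k, h using Nat.le_induction with
  | base => simp only [Fin.castLE_rfl, id]
  | succ k hjk ih => exact (ultraLim_comp_castSucc k U _).trans (ih _)

end UltrafilterLimits

lemma norm_le_of_tendsto_norm_add {X ι : Type*} [NormedAddCommGroup X] [NormedSpace ℝ X]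
    {l : Filter ι} [l.NeBot] {y : X} {v : ι → X} {L : ℝ}
    (hv : ∀ φ : X →L[ℝ] ℝ, Tendsto (fun b => φ (v b)) l (𝓝 0))
    (hL : Tendsto (fun b => ‖y + v b‖) l (𝓝 L)) : ‖y‖ ≤ L := by
  obtain ⟨φ, hφ, hφy⟩ := exists_dual_vector'' ℝ y
  have hlim : Tendsto (fun b => φ (y + v b)) l (𝓝 ‖y‖) := by
    simpa [hφy] using (hv φ).const_add (φ y)
  refine le_of_tendsto_of_tendsto hlim hL (Eventually.of_forall fun b => ?_)
  calc φ (y + v b) ≤ ‖φ (y + v b)‖ := Real.le_norm_self _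
    _ ≤ ‖φ‖ * ‖y + v b‖ := φ.le_opNorm _
    _ ≤ ‖y + v b‖ := mul_le_of_le_one_left (norm_nonneg _) hφ

lemma Fin.sum_castLE_of_eq_zero {M : Type*} [AddCommMonoid M] {j k : ℕ} (h : j ≤ k)
    (f : Fin k → M) (hf : ∀ i : Fin k, j ≤ i.1 → f i = 0) :
    ∑ i : Fin j, f (Fin.castLE h i) = ∑ i, f i :=
  Fintype.sum_of_injective _ (Fin.castLE_injective h) _ _
    (fun i hi => hf i (not_lt.mp fun hij => hi ⟨⟨i, hij⟩, rfl⟩)) fun _ => rfl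

section Tree

variable {X : Type*} [NormedAddCommGroup X] [NormedSpace ℝ X] {k : ℕ}

def treePartialSum (t : TreeU X k) (x : X) (a : Fin k → ℝ) {j : ℕ} (hj : j ≤ k)
    (p : Fin j → ℕ) : X :=
  x + ∑ i : Fin j, a (Fin.castLE hj i) • t (Fin.castLE hj i) fun l => p (Fin.castLE i.isLt l)

lemma norm_treePartialSum_le {t : TreeU X k} (ht : NormalizedU t) (x : X) (a : Fin k → ℝ)
    {j : ℕ} (hj : j ≤ k) (p : Fin j → ℕ) :
    ‖treePartialSum t x a hj p‖ ≤ ‖x‖ + ∑ i : Fin j, |a (Fin.castLE hj i)| := by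
  refine (norm_add_le _ _).trans ?_
  gcongr
  refine (norm_sum_le _ _).trans ?_
  gcongr with i
  rw [norm_smul, ht, mul_one, Real.norm_eq_abs]

lemma treePartialSum_snoc (t : TreeU X k) (x : X) (a : Fin k → ℝ) {j : ℕ} (h : j < k)
    (p : Fin j → ℕ) (b : ℕ) :
    treePartialSum t x a h (Fin.snoc p b)
      = treePartialSum t x a h.le p + a ⟨j, h⟩ • t ⟨j, h⟩ (Fin.snoc p b) := by
  rw [treePartialSum, Fin.sum_univ_castSucc, ← add_assoc]
  congr 3 with i
  exact congrArg (fun v => a (Fin.castLE h.le i) • t (Fin.castLE h.le i) v)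
    (funext fun l => Fin.snoc_castSucc (α := fun _ => ℕ) b p (Fin.castLE i.isLt l))

lemma treeNorm_truncate (U : Fin k → Ultrafilter ℕ) (t : TreeU X k) (x : X) (a : Fin k → ℝ)
    {j : ℕ} (hj : j ≤ k) :
    treeNorm U t x (fun i => if i.1 < j then a i else 0)
      = ultraLim j (fun i => U (Fin.castLE hj i)) fun p => ‖treePartialSum t x a hj p‖ := by
  rw [← ultraLim_comp_castLE hj, treeNorm]
  congr with n
  rw [treePartialSum, ← Fin.sum_castLE_of_eq_zero hj]
  · simp only [Fin.val_castLE, Fin.is_lt, if_true]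
    rfl
  · intro i hi
    simp only [not_lt.mpr hi, if_false, zero_smul]

lemma treeNorm_truncate_le_succ {U : Fin k → Ultrafilter ℕ} {t : TreeU X k}
    (ht : NormalizedU t) (hw : WeaklyNullU U t) (x : X) (a : Fin k → ℝ) {j : ℕ} (h : j < k) :
    treeNorm U t x (fun i => if i.1 < j then a i else 0)
      ≤ treeNorm U t x (fun i => if i.1 < j + 1 then a i else 0) := by
  rw [treeNorm_truncate U t x a h.le, treeNorm_truncate U t x a h]
  set B := ‖x‖ + ∑ i : Fin j, |a (Fin.castLE h.le i)|
  set C := B + |a ⟨j, h⟩|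
  have hbound : ∀ p, ‖treePartialSum t x a h.le p‖ ≤ B := norm_treePartialSum_le ht x a h.le
  have hbound_succ : ∀ p b, |‖treePartialSum t x a h (Fin.snoc p b)‖| ≤ C := by
    intro p b
    rw [abs_norm, treePartialSum_snoc]
    refine (norm_add_le _ _).trans (add_le_add (hbound p) ?_)
    rw [norm_smul, ht, mul_one, Real.norm_eq_abs]
  show _ ≤ ultraLim j _ fun p =>
    limUnder (U ⟨j, h⟩) fun b => ‖treePartialSum t x a h (Fin.snoc p b)‖
  refine ultraLim_mono (C := C) (fun p => ?_) (fun p => abs_limUnder_le _ (hbound_succ p))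
    ((hw ⟨j, h⟩).mono fun p hp => ?_)
  · rw [abs_norm]
    exact (hbound p).trans (le_add_of_nonneg_right (abs_nonneg _))
  · refine norm_le_of_tendsto_norm_add (l := (U ⟨j, h⟩ : Filter ℕ))
      (v := fun b => a ⟨j, h⟩ • t ⟨j, h⟩ (Fin.snoc p b)) (fun φ => ?_) ?_
    · simpa using (hp φ).const_mul (a ⟨j, h⟩)
    · simpa only [treePartialSum_snoc] using tendsto_limUnder_of_abs_le _ (hbound_succ p)

end Tree

theorem stmt11_general (X : Type*) [NormedAddCommGroup X] [NormedSpace ℝ X]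
    (k : ℕ) (U : Fin k → Ultrafilter ℕ)
    (t : TreeU X k) (ht : NormalizedU t) (hw : WeaklyNullU U t) :
    ∀ j : ℕ, j ≤ k → ∀ (x : X) (a : Fin k → ℝ),
      treeNorm U t x (fun i => if i.1 < j then a i else 0) ≤ treeNorm U t x a := by
  intro j hj x a
  have htop : (fun i : Fin k => if i.1 < k then a i else 0) = a := funext fun i => if_pos i.isLt
  induction hj using Nat.decreasingInduction with
  | self => rw [htop]
  | of_succ j h ih => exact (treeNorm_truncate_le_succ ht hw x a h).trans ih

/-- Monotonicity of `N_t^{Ū}`: truncating the coefficient sequence does not increase the norm. -/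
theorem stmt11 (X : Type*) [NormedAddCommGroup X] [NormedSpace ℝ X] [CompleteSpace X]
    (k : ℕ) (U : Fin k → Ultrafilter ℕ) (hU : ∀ i, FreeUF (U i))
    (t : TreeU X k) (ht : NormalizedU t) (hw : WeaklyNullU U t) :
    ∀ j : ℕ, j ≤ k → ∀ (x : X) (a : Fin k → ℝ),
      treeNorm U t x (fun i => if i.1 < j then a i else 0) ≤ treeNorm U t x a :=
  stmt11_general X k U t ht hw
end
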